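/- Soundness of the MILP model for the TOP: suppose every component size satisfies s c ≥ 1. Let x : C → Fin T → ℕ, y : Fin T → ℕ, and z : P → Fin T → ℕ all take only the values 0 and 1, and suppose they satisfy: (i) ∑_{t} x c t = 1 for every component c; (ii) ∑_{c} (x c t) · (s c) ≤ (y t) · N for every trolley t; (iii) ∑_{t} z p t ≤ l_p for every PCB p; and (iv) for every p and t, z p t = 1 if and only if there exists c ∈ S_p with x c t = 1. Then the function f : C → Fin T assigning to each component c the unique trolley t with x c t = 1 is a capacity-feasible loading that respects the PCB limits, and the number of distinct trolleys in the range of f is at most ∑_{t} y t. -/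

import Mathlib

/-!
Constraint (i) together with `x c (f c) = 1` forces `x c t` to be the indicator of `f c = t`,
so the left side of (ii) is exactly the load of trolley `t`. Since `y t ≤ 1`, (ii) bounds that load
by `N`; since sizes are positive, a trolley carrying some component has positive load, forcing
`y t ≥ 1`. Every trolley used by a PCB `p` has `z p t = 1` by (iv), so (iii) bounds their number.
-/

/-- The load of trolley `t` under loading `f` with component sizes `s`. -/
def trolleyLoad {C : Type*} [Fintype C] {k : ℕ} (s : C → ℕ) (f : C → Fin k)
    (t : Fin k) : ℕ :=
  ∑ c ∈ Finset.univ.filter (fun c => f c = t), s c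

open Finset

theorem eq_ite_of_sum_eq_one {ι : Type*} [Fintype ι] [DecidableEq ι] {g : ι → ℕ} {i₀ : ι}
    (hsum : ∑ i, g i = 1) (hi₀ : g i₀ = 1) (i : ι) : g i = if i₀ = i then 1 else 0 := by
  split_ifs with h
  · exact h ▸ hi₀
  · rw [← add_sum_erase _ _ (mem_univ i₀), hi₀, add_eq_left] at hsum
    exact sum_eq_zero_iff.mp hsum i (mem_erase.mpr ⟨Ne.symm h, mem_univ i⟩)

theorem card_le_sum_of_one_le {α : Type*} [Fintype α] {g : α → ℕ} {F : Finset α}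
    (h : ∀ a ∈ F, 1 ≤ g a) : #F ≤ ∑ a, g a :=
  calc #F = #F • 1 := by rw [smul_eq_mul, mul_one]
    _ ≤ ∑ a ∈ F, g a := card_nsmul_le_sum F g 1 h
    _ ≤ ∑ a, g a := sum_le_sum_of_subset (subset_univ F)

section trolleyLoad

variable {C : Type*} [Fintype C] {k : ℕ} (s : C → ℕ) (f : C → Fin k)

theorem trolleyLoad_eq_sum_mul {x : C → Fin k → ℕ}
    (hx : ∀ c t, x c t = if f c = t then 1 else 0) (t : Fin k) :
    trolleyLoad s f t = ∑ c, x c t * s c := by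
  simp only [trolleyLoad, sum_filter, hx, ite_mul, one_mul, zero_mul]

theorem le_trolleyLoad_self (c : C) : s c ≤ trolleyLoad s f (f c) :=
  single_le_sum (fun _ _ => Nat.zero_le _) (mem_filter.mpr ⟨mem_univ c, rfl⟩)

end trolleyLoad

theorem milp_sound_general
    {C P : Type*} [Fintype C]
    (s : C → ℕ) (hs : ∀ c, 1 ≤ s c) (N T : ℕ) (S : P → Finset C) (l : P → ℕ)
    (x : C → Fin T → ℕ) (y : Fin T → ℕ) (z : P → Fin T → ℕ)
    (hy : ∀ t, y t = 0 ∨ y t = 1)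
    (h1 : ∀ c, ∑ t, x c t = 1)
    (h2 : ∀ t, ∑ c, x c t * s c ≤ y t * N)
    (h3 : ∀ p, ∑ t, z p t ≤ l p)
    (h4 : ∀ p t, z p t = 1 ↔ ∃ c ∈ S p, x c t = 1)
    (f : C → Fin T) (hf : ∀ c, x c (f c) = 1) :
    (∀ t, trolleyLoad s f t ≤ N) ∧
      (∀ p, ((S p).image f).card ≤ l p) ∧
      (Finset.univ.image f).card ≤ ∑ t, y t := by
  have hload (t : Fin T) : trolleyLoad s f t ≤ y t * N :=
    (trolleyLoad_eq_sum_mul s f (fun c => eq_ite_of_sum_eq_one (h1 c) (hf c)) t).trans_le (h2 t)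
  refine ⟨fun t => (hload t).trans ?_, fun p => ?_, card_le_sum_of_one_le ?_⟩
  · rcases hy t with h | h <;> simp [h]
  · refine (card_le_sum_of_one_le (forall_mem_image.mpr fun c hc => ?_)).trans (h3 p)
    exact ((h4 p (f c)).mpr ⟨c, hc, hf c⟩).ge
  · refine forall_mem_image.mpr fun c _ => Nat.pos_of_ne_zero fun hyc => ?_
    have := (hs c).trans ((le_trolleyLoad_self s f c).trans (hload (f c)))
    simp [hyc] at this

/-- soundness of the MILP model for the TOP. If 0/1-valued
`x, y, z` satisfy constraints (i)–(iv) and every component size is at least 1,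
then the function `f` picking for each component `c` the (unique) trolley `t`
with `x c t = 1` is a capacity-feasible loading respecting the PCB limits,
and the number of distinct trolleys used by `f` is at most `∑ t, y t`. -/
theorem milp_sound
    {C P : Type*} [Fintype C] [Fintype P] [DecidableEq C]
    (s : C → ℕ) (hs : ∀ c, 1 ≤ s c) (N T : ℕ) (S : P → Finset C) (l : P → ℕ)
    (x : C → Fin T → ℕ) (y : Fin T → ℕ) (z : P → Fin T → ℕ)
    (hx : ∀ c t, x c t = 0 ∨ x c t = 1)
    (hy : ∀ t, y t = 0 ∨ y t = 1)
    (hz : ∀ p t, z p t = 0 ∨ z p t = 1)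
    (h1 : ∀ c, ∑ t, x c t = 1)
    (h2 : ∀ t, ∑ c, x c t * s c ≤ y t * N)
    (h3 : ∀ p, ∑ t, z p t ≤ l p)
    (h4 : ∀ p t, z p t = 1 ↔ ∃ c ∈ S p, x c t = 1)
    (f : C → Fin T) (hf : ∀ c, x c (f c) = 1) :
    (∀ t, trolleyLoad s f t ≤ N) ∧
      (∀ p, ((S p).image f).card ≤ l p) ∧
      (Finset.univ.image f).card ≤ ∑ t, y t :=
  milp_sound_general s hs N T S l x y z hy h1 h2 h3 h4 f hf
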